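/- arXiv:2502.00660 — 3 statements merged into one kernel-verified Lean document; each statement's English description precedes it below -/
import Mathlib

section
/- Fix m > 0 and set a_m = √(1 + e^{-2m}) − e^{-m} (equivalently a_m² = 1 + 2e^{-2m} − 2e^{-m}√(1 + e^{-2m})). Then 0 < a_m < 1, and the function u_m(x) = log( 2a_m / (1 − a_m²‖x‖²) ), defined for x ∈ ℝ² with ‖x‖ < 1/a_m (in particular on the closed unit disk), satisfies Δu_m(x) = e^{2u_m(x)} for every x with ‖x‖ < 1/a_m, and u_m(x) = m for every x with ‖x‖ = 1. -/
open Real Set Filter MeasureTheory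
open scoped Topology

noncomputable section

/-- The Euclidean plane. -/
abbrev E2 : Type := EuclideanSpace ℝ (Fin 2)

/-- The Euclidean Laplacian: the sum of the two second partial derivatives. -/
noncomputable def lap (u : E2 → ℝ) (x : E2) : ℝ :=
  ∑ i : Fin 2, fderiv ℝ (fun y => fderiv ℝ u y (EuclideanSpace.single i 1)) x
    (EuclideanSpace.single i 1)

noncomputable def aCoef (m : ℝ) : ℝ := Real.sqrt (1 + Real.exp (-2 * m)) - Real.exp (-m)

noncomputable def uFun (m : ℝ) (x : E2) : ℝ :=
  Real.log (2 * aCoef m / (1 - aCoef m ^ 2 * ‖x‖ ^ 2))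

lemma E2_norm_sq (x : E2) : ‖x‖ ^ 2 = (x 0) ^ 2 + (x 1) ^ 2 := by
  rw [EuclideanSpace.norm_eq, Real.sq_sqrt (by positivity)]
  simp [Fin.sum_univ_two, sq_abs]

/-- the denominator -/
def gDen (a : ℝ) (y : E2) : ℝ := 1 - a ^ 2 * ((y 0) ^ 2 + (y 1) ^ 2)

lemma hasFDerivAt_coord (i : Fin 2) (x : E2) :
    HasFDerivAt (fun y : E2 => y i) (EuclideanSpace.proj i : E2 →L[ℝ] ℝ) x := by
  have h := (EuclideanSpace.proj i : E2 →L[ℝ] ℝ).hasFDerivAt (x := x)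
  have he : ⇑(EuclideanSpace.proj i : E2 →L[ℝ] ℝ) = fun y : E2 => y i := by ext y; simp
  rwa [he] at h

/-- derivative of the denominator -/
def gD (a : ℝ) (x : E2) : E2 →L[ℝ] ℝ :=
  -((a ^ 2) • ((2 * x 0) • (EuclideanSpace.proj 0 : E2 →L[ℝ] ℝ)
      + (2 * x 1) • (EuclideanSpace.proj 1 : E2 →L[ℝ] ℝ)))

lemma hasFDerivAt_gDen (a : ℝ) (x : E2) : HasFDerivAt (gDen a) (gD a x) x := by
  have h0 := hasFDerivAt_coord 0 x
  have h1 := hasFDerivAt_coord 1 x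
  have hs0 : HasFDerivAt (fun y : E2 => (y 0) ^ 2)
      ((2 * x 0) • (EuclideanSpace.proj 0 : E2 →L[ℝ] ℝ)) x := by
    simpa [pow_two, two_mul, add_smul] using h0.fun_mul h0
  have hs1 : HasFDerivAt (fun y : E2 => (y 1) ^ 2)
      ((2 * x 1) • (EuclideanSpace.proj 1 : E2 →L[ℝ] ℝ)) x := by
    simpa [pow_two, two_mul, add_smul] using h1.fun_mul h1
  have := ((hs0.add hs1).const_mul (a ^ 2)).const_sub 1
  exact (by simpa [gD, smul_add] using this :
    HasFDerivAt (fun y : E2 => 1 - a ^ 2 * ((y 0) ^ 2 + (y 1) ^ 2)) (gD a x) x)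

lemma gD_apply (a : ℝ) (x : E2) (i : Fin 2) :
    gD a x (EuclideanSpace.single i (1:ℝ)) = -(2 * a ^ 2 * x i) := by
  fin_cases i <;>
    simp [gD, EuclideanSpace.single_apply] <;> ring

lemma gDen_pos {a : ℝ} (ha : 0 < a) {x : E2} (hx : ‖x‖ < 1 / a) : 0 < gDen a x := by
  have h2 : ‖x‖ ^ 2 = (x 0) ^ 2 + (x 1) ^ 2 := E2_norm_sq x
  have hn : 0 ≤ ‖x‖ := norm_nonneg x
  have hlt : a * ‖x‖ < 1 := by
    rw [lt_div_iff₀ ha] at hx; linarith [hx]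
  have hprod : 0 ≤ a * ‖x‖ := mul_nonneg ha.le hn
  have h1 : a ^ 2 * ‖x‖ ^ 2 < 1 := by nlinarith
  unfold gDen; nlinarith [h2]

lemma gDen_open (a : ℝ) : IsOpen {y : E2 | 0 < gDen a y} := by
  have h0 : Continuous fun y : E2 => y 0 := by
    have he : ⇑(EuclideanSpace.proj 0 : E2 →L[ℝ] ℝ) = fun y : E2 => y 0 := by ext y; simp
    rw [← he]; exact (EuclideanSpace.proj 0 : E2 →L[ℝ] ℝ).continuous
  have h1 : Continuous fun y : E2 => y 1 := by
    have he : ⇑(EuclideanSpace.proj 1 : E2 →L[ℝ] ℝ) = fun y : E2 => y 1 := by ext y; simp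
    rw [← he]; exact (EuclideanSpace.proj 1 : E2 →L[ℝ] ℝ).continuous
  have hc : Continuous (gDen a) :=
    continuous_const.sub (continuous_const.mul ((h0.pow 2).add (h1.pow 2)))
  exact isOpen_lt continuous_const hc

/-- first derivative of uFun -/
lemma fderiv_uFun {m a : ℝ} (hA : a = aCoef m) (ha : 0 < a) {x : E2} (hx : 0 < gDen a x) :
    fderiv ℝ (uFun m) x = -((gDen a x)⁻¹ • gD a x) := by
  have heq : uFun m =ᶠ[𝓝 x] fun y => Real.log (2 * a) - Real.log (gDen a y) := by
    filter_upwards [(gDen_open a).mem_nhds hx] with y hy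
    have hgy : gDen a y ≠ 0 := ne_of_gt hy
    have h2a : 2 * a ≠ 0 := by positivity
    rw [uFun, ← hA, E2_norm_sq,
      show (1 - a ^ 2 * ((y 0) ^ 2 + (y 1) ^ 2)) = gDen a y from rfl,
      Real.log_div h2a hgy]
  have hlog : HasFDerivAt (fun y => Real.log (2 * a) - Real.log (gDen a y))
      (-((gDen a x)⁻¹ • gD a x)) x :=
    ((hasFDerivAt_gDen a x).log (ne_of_gt hx)).const_sub _
  rw [heq.fderiv_eq, hlog.fderiv]

theorem stmt_0 (m : ℝ) (hm : 0 < m) :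
    (0 < aCoef m ∧ aCoef m < 1) ∧
    aCoef m ^ 2
      = 1 + 2 * Real.exp (-2 * m) - 2 * Real.exp (-m) * Real.sqrt (1 + Real.exp (-2 * m)) ∧
    (∀ x : E2, ‖x‖ < 1 / aCoef m → lap (uFun m) x = Real.exp (2 * uFun m x)) ∧
    (∀ x : E2, ‖x‖ = 1 → uFun m x = m) := by
  set t := Real.exp (-m) with htdef
  set s := Real.sqrt (1 + Real.exp (-2 * m)) with hsdef
  have ht0 : 0 < t := Real.exp_pos _
  have ht1 : t < 1 := Real.exp_lt_one_iff.mpr (by linarith)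
  have htE : Real.exp (-2 * m) = t ^ 2 := by
    rw [htdef, show (-2 * m) = (-m) + (-m) by ring, Real.exp_add]; ring
  have hs0 : 0 ≤ s := Real.sqrt_nonneg _
  have hs2 : s ^ 2 = 1 + Real.exp (-2 * m) := Real.sq_sqrt (by positivity)
  have hst : t < s := by nlinarith
  have ha0 : 0 < aCoef m := by rw [aCoef, ← htdef, ← hsdef]; linarith
  have ha1 : aCoef m < 1 := by rw [aCoef, ← htdef, ← hsdef]; nlinarith
  have haq : aCoef m ^ 2
      = 1 + 2 * Real.exp (-2 * m) - 2 * Real.exp (-m) * s := by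
    rw [aCoef, ← htdef, ← hsdef]; linear_combination hs2 - htE
  set a := aCoef m with hA
  have h1a : 1 - a ^ 2 = 2 * t * a := by
    rw [hA, aCoef, ← htdef, ← hsdef]; linear_combination -hs2 - htE
  refine ⟨⟨ha0, ha1⟩, haq, ?_, ?_⟩
  · intro x hx
    have hgx : 0 < gDen a x := gDen_pos ha0 hx
    have hg : gDen a x ≠ 0 := ne_of_gt hgx
    -- second partials
    have key : ∀ i : Fin 2,
        fderiv ℝ (fun y => fderiv ℝ (uFun m) y (EuclideanSpace.single i 1)) x
          (EuclideanSpace.single i 1)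
        = 2 * a ^ 2 / gDen a x
          + (2 * a ^ 2 * x i) * (2 * a ^ 2 * x i) / (gDen a x) ^ 2 := by
      intro i
      have heq : (fun y => fderiv ℝ (uFun m) y (EuclideanSpace.single i 1))
          =ᶠ[𝓝 x] fun y => (2 * a ^ 2 * y i) * (gDen a y)⁻¹ := by
        filter_upwards [(gDen_open a).mem_nhds hgx] with y hy
        rw [fderiv_uFun hA ha0 hy]
        simp only [ContinuousLinearMap.neg_apply, ContinuousLinearMap.smul_apply,
          gD_apply, smul_eq_mul]
        ring
      rw [heq.fderiv_eq]
      have hnum : HasFDerivAt (fun y : E2 => 2 * a ^ 2 * y i)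
          ((2 * a ^ 2) • (EuclideanSpace.proj i : E2 →L[ℝ] ℝ)) x :=
        (hasFDerivAt_coord i x).const_mul _
      have hinv : HasFDerivAt (fun y : E2 => (gDen a y)⁻¹)
          ((-(gDen a x ^ 2)⁻¹) • gD a x) x :=
        (hasDerivAt_inv hg).comp_hasFDerivAt x (hasFDerivAt_gDen a x)
      have hp := hnum.fun_mul hinv
      rw [hp.fderiv]
      simp only [ContinuousLinearMap.add_apply, ContinuousLinearMap.smul_apply,
        smul_eq_mul, gD_apply]
      have hpr : (EuclideanSpace.proj i : E2 →L[ℝ] ℝ) (EuclideanSpace.single i (1:ℝ)) = 1 := by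
        simp [EuclideanSpace.single_apply]
      rw [hpr]
      field_simp
      ring
    rw [lap, Fin.sum_univ_two, key 0, key 1]
    -- RHS
    have hu : uFun m x = Real.log (2 * a / gDen a x) := by
      rw [uFun, ← hA, E2_norm_sq, gDen]
    rw [hu, show (2:ℝ) * Real.log (2 * a / gDen a x)
        = Real.log ((2 * a / gDen a x) ^ 2) by rw [Real.log_pow]; push_cast; ring,
      Real.exp_log (by positivity)]
    have hr : gDen a x = 1 - a ^ 2 * ((x 0) ^ 2 + (x 1) ^ 2) := rfl
    rw [hr] at hg ⊢
    field_simp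
    ring
  · intro x hx
    have hg1 : (1:ℝ) - a ^ 2 * ‖x‖ ^ 2 = 2 * t * a := by rw [hx]; simpa using h1a
    have hexp : 2 * a / (1 - a ^ 2 * ‖x‖ ^ 2) = Real.exp m := by
      rw [hg1, htdef, Real.exp_neg]
      field_simp
    rw [uFun, ← hA, hexp, Real.log_exp]
end
end

section
/- Let T ∈ (0, ∞], ε₀ ∈ (0,1), and let ψ : ∂B₁ × [0,T) → ℝ be continuous with ψ(x,t) ≤ 1 + ε₀ for all (x,t). Let v : cl(B₁) × [0,T) → ℝ be such that v, ∂ₜv, ∇v and the spatial second derivatives of v are continuous on cl(B₁) × [0,T), v satisfies ∂ₜv(x,t) = e^{−2v(x,t)}Δv(x,t) − 1 for all x ∈ cl(B₁), t ∈ [0,T), and ⟨∇v(x,t), x⟩ = ψ(x,t)e^{v(x,t)} − 1 for all ‖x‖ = 1, t ∈ [0,T). Suppose the initial data u₀ = v(·,0) satisfies sup_{∂B₁} u₀ < sup_{cl(B₁)} u₀ < −log(1 + ε₀). Then for every t ∈ [0,T), sup_{x ∈ cl(B₁)} v(x,t) ≤ sup_{cl(B₁)} u₀ − t. In particular, if T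 = ∞ then sup_{cl(B₁)} v(·,t) → −∞ as t → ∞, so v does not converge to the Loewner–Nirenberg solution u_LN(x) = log(2/(1−‖x‖²)) on any compact subset of B₁, even though ψ may be taken arbitrarily close to 1. -/
open Real Set Filter MeasureTheory
open scoped Topology

noncomputable section

/-- The time interval `[0, T)` for `T ∈ (0, ∞]`. -/
def Itv (T : EReal) : Set ℝ := {t : ℝ | 0 ≤ t ∧ (t : EReal) < T}

/-- The Loewner-Nirenberg solution on the unit disk: the conformal factor of the
complete hyperbolic metric. -/
noncomputable def uLN (x : E2) : ℝ := Real.log (2 / (1 - ‖x‖ ^ 2))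


lemma aux_slope_pos {q : ℝ → ℝ} {c : ℝ} (hq : HasDerivAt q c 0) (h0 : q 0 = 0) (hc : 0 < c) :
    ∀ᶠ s in 𝓝[>] (0:ℝ), 0 < q s := by
  have ht := hasDerivAt_iff_tendsto_slope.1 hq
  have h1 : ∀ᶠ s in 𝓝[≠] (0:ℝ), 0 < slope q 0 s := ht.eventually (lt_mem_nhds hc)
  have h2 : ∀ᶠ s in 𝓝[>] (0:ℝ), 0 < slope q 0 s :=
    h1.filter_mono (nhdsWithin_mono 0 (fun s hs => ne_of_gt hs))
  filter_upwards [h2, self_mem_nhdsWithin] with s hs hs0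
  have hsl : slope q 0 s = q s / s := by simp [slope, h0]; ring
  rw [hsl] at hs
  have hmul := mul_pos hs (show (0:ℝ) < s from hs0)
  rwa [div_mul_cancel₀ _ (ne_of_gt hs0)] at hmul

lemma aux_slope_neg_left {φ : ℝ → ℝ} {c : ℝ} (hφ : HasDerivAt φ c 1) (hc : c < 0) :
    ∃ r : ℝ, 0 < r ∧ r < 1 ∧ φ 1 < φ r := by
  have ht := hasDerivAt_iff_tendsto_slope.1 hφ
  have h1 : ∀ᶠ r in 𝓝[≠] (1:ℝ), slope φ 1 r < 0 := ht.eventually (gt_mem_nhds hc)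
  have h2 : ∀ᶠ r in 𝓝[<] (1:ℝ), slope φ 1 r < 0 :=
    h1.filter_mono (nhdsWithin_mono 1 (fun s hs => ne_of_lt hs))
  have h3 : ∀ᶠ r in 𝓝[<] (1:ℝ), r ∈ Ioo (0:ℝ) 1 :=
    eventually_of_mem (Ioo_mem_nhdsLT_of_mem (by constructor <;> norm_num)) (fun r hr => hr)
  obtain ⟨r, hr1, hr2⟩ := (h2.and h3).exists
  refine ⟨r, hr2.1, hr2.2, ?_⟩
  have hden : r - 1 < 0 := by linarith [hr2.2]
  have hsl : slope φ 1 r = (φ r - φ 1) / (r - 1) := by simp [slope]; ring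
  rw [hsl] at hr1
  rcases div_neg_iff.1 hr1 with ⟨hnum, hd⟩ | ⟨hnum, hd⟩
  · linarith
  · linarith

lemma line_hasDerivAt (x₀ e : E2) (s : ℝ) : HasDerivAt (fun s : ℝ => x₀ + s • e) e s := by
  simpa using ((hasDerivAt_id s).smul_const e).const_add x₀

lemma lap_nonpos {u : E2 → ℝ} {x₀ : E2} (hx : ‖x₀‖ < 1)
    (hu : ContinuousOn u (Metric.closedBall 0 1))
    (hmax : ∀ y ∈ Metric.closedBall (0:E2) 1, u y ≤ u x₀) : lap u x₀ ≤ 0 := by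
  have hfd0 : fderiv ℝ u x₀ = 0 := by
    by_cases hud : DifferentiableAt ℝ u x₀
    · have hnb : Metric.closedBall (0:E2) 1 ∈ 𝓝 x₀ :=
        mem_nhds_iff.2 ⟨Metric.ball 0 1, Metric.ball_subset_closedBall, Metric.isOpen_ball,
          mem_ball_zero_iff.2 hx⟩
      have hloc : IsLocalMax u x₀ := eventually_of_mem hnb hmax
      exact hloc.fderiv_eq_zero
    · exact fderiv_zero_of_not_differentiableAt hud
  rw [lap]
  apply Finset.sum_nonpos
  intro i _
  set e : E2 := EuclideanSpace.single i 1 with he_def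
  have he : ‖e‖ = 1 := by rw [he_def, EuclideanSpace.norm_single, norm_one]
  set Ge : E2 → ℝ := fun y => fderiv ℝ u y e with hGe_def
  by_cases hG : DifferentiableAt ℝ Ge x₀
  · by_contra hpos
    push_neg at hpos
    set c : ℝ := fderiv ℝ Ge x₀ e with hc_def
    have hcpos : 0 < c := hpos
    set q : ℝ → ℝ := fun s => Ge (x₀ + s • e) with hq_def
    have hq : HasDerivAt q c 0 := by
      have hG' : HasFDerivAt Ge (fderiv ℝ Ge x₀) (x₀ + (0:ℝ) • e) := by
        simpa using hG.hasFDerivAt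
      have h1 := hG'.comp_hasDerivAt 0 (line_hasDerivAt x₀ e 0)
      exact h1
    have hq0 : q 0 = 0 := by simp [hq_def, hGe_def, hfd0]
    have hev := aux_slope_pos hq hq0 hcpos
    obtain ⟨δ₁, hδ₁, hsub⟩ := mem_nhdsGT_iff_exists_Ioo_subset.1 hev
    set δ : ℝ := min δ₁ ((1 - ‖x₀‖)/2) with hδ_def
    have hδpos : 0 < δ := lt_min hδ₁ (by linarith)
    have hmem : ∀ s ∈ Icc (0:ℝ) δ, x₀ + s • e ∈ Metric.closedBall (0:E2) 1 := by
      intro s hs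
      rw [mem_closedBall_zero_iff]
      calc ‖x₀ + s • e‖ ≤ ‖x₀‖ + ‖s • e‖ := norm_add_le _ _
        _ = ‖x₀‖ + s := by rw [norm_smul, he, mul_one, Real.norm_eq_abs, abs_of_nonneg hs.1]
        _ ≤ ‖x₀‖ + (1 - ‖x₀‖)/2 := by
            have := hs.2
            have : s ≤ (1 - ‖x₀‖)/2 := le_trans this (min_le_right _ _)
            linarith
        _ ≤ 1 := by linarith
    set f : ℝ → ℝ := fun s => u (x₀ + s • e) with hf_def
    have hline_cont : Continuous (fun s : ℝ => x₀ + s • e) :=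
      continuous_const.add (continuous_id.smul continuous_const)
    have hfc : ContinuousOn f (Icc 0 δ) :=
      hu.comp hline_cont.continuousOn hmem
    have hfd : ∀ s ∈ interior (Icc (0:ℝ) δ), 0 < deriv f s := by
      rw [interior_Icc]
      intro s hs
      have hqs : 0 < q s := hsub ⟨hs.1, lt_of_lt_of_le hs.2 (min_le_left _ _)⟩
      have hne : fderiv ℝ u (x₀ + s • e) ≠ 0 := by
        intro h
        rw [hq_def] at hqs
        simp only [hGe_def] at hqs
        rw [h] at hqs
        simp at hqs
      have hud : DifferentiableAt ℝ u (x₀ + s • e) := by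
        by_contra h
        exact hne (fderiv_zero_of_not_differentiableAt h)
      have hfds : HasDerivAt f (q s) s := by
        have h1 := hud.hasFDerivAt.comp_hasDerivAt s (line_hasDerivAt x₀ e s)
        exact h1
      rw [hfds.deriv]
      exact hqs
    have hmono := strictMonoOn_of_deriv_pos (convex_Icc 0 δ) hfc hfd
    have h01 : (0:ℝ) ∈ Icc (0:ℝ) δ := ⟨le_rfl, hδpos.le⟩
    have h02 : δ ∈ Icc (0:ℝ) δ := ⟨hδpos.le, le_rfl⟩
    have := hmono h01 h02 hδpos
    have hf0 : f 0 = u x₀ := by simp [hf_def]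
    have hfδ : f δ ≤ u x₀ := hmax _ (hmem δ h02)
    rw [hf0] at this
    linarith
  · have : fderiv ℝ Ge x₀ = 0 := fderiv_zero_of_not_differentiableAt hG
    show fderiv ℝ Ge x₀ e ≤ 0
    rw [this]; simp

lemma boundary_contra {u : E2 → ℝ} {x₀ : E2} (hx : ‖x₀‖ = 1)
    (hneg : fderiv ℝ u x₀ x₀ < 0)
    (hmax : ∀ y ∈ Metric.closedBall (0:E2) 1, u y ≤ u x₀) : False := by
  have hne : fderiv ℝ u x₀ ≠ 0 := by
    intro h; rw [h] at hneg; simp at hneg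
  have hud : DifferentiableAt ℝ u x₀ := by
    by_contra h; exact hne (fderiv_zero_of_not_differentiableAt h)
  set φ : ℝ → ℝ := fun r => u (r • x₀) with hφ_def
  have hφ : HasDerivAt φ (fderiv ℝ u x₀ x₀) 1 := by
    have hl : HasDerivAt (fun r : ℝ => r • x₀) x₀ 1 := by
      simpa using (hasDerivAt_id (1:ℝ)).smul_const x₀
    have h1 : HasFDerivAt u (fderiv ℝ u x₀) ((1:ℝ) • x₀) := by
      rw [one_smul]; exact hud.hasFDerivAt
    exact h1.comp_hasDerivAt 1 hl
  obtain ⟨r, hr0, hr1, hlt⟩ := aux_slope_neg_left hφ hneg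
  have hmem : r • x₀ ∈ Metric.closedBall (0:E2) 1 := by
    rw [mem_closedBall_zero_iff, norm_smul, hx, mul_one, Real.norm_eq_abs, abs_of_pos hr0]
    exact hr1.le
  have h1 : φ r ≤ u x₀ := hmax _ hmem
  have h2 : φ 1 = u x₀ := by simp [hφ_def]
  linarith

theorem stmt_3 (T : EReal) (hT : 0 < T) (ε₀ : ℝ) (hε₀ : ε₀ ∈ Ioo (0:ℝ) 1)
    (ψ : E2 → ℝ → ℝ)
    (hψc : ContinuousOn (fun p : E2 × ℝ => ψ p.1 p.2) (Metric.sphere (0:E2) 1 ×ˢ Itv T))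
    (hψle : ∀ x : E2, ‖x‖ = 1 → ∀ t ∈ Itv T, ψ x t ≤ 1 + ε₀)
    (v : E2 → ℝ → ℝ)
    (hvc : ContinuousOn (fun p : E2 × ℝ => v p.1 p.2) (Metric.closedBall (0:E2) 1 ×ˢ Itv T))
    (hvt : ContinuousOn (fun p : E2 × ℝ => deriv (v p.1) p.2) (Metric.closedBall (0:E2) 1 ×ˢ Itv T))
    (hvg : ContinuousOn (fun p : E2 × ℝ => gradient (fun y => v y p.2) p.1) (Metric.closedBall (0:E2) 1 ×ˢ Itv T))
    (hv2 : ContinuousOn (fun p : E2 × ℝ =>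
      fderiv ℝ (fun y => fderiv ℝ (fun z => v z p.2) y) p.1) (Metric.closedBall (0:E2) 1 ×ˢ Itv T))
    (hpde : ∀ x ∈ Metric.closedBall (0:E2) 1, ∀ t ∈ Itv T,
      deriv (v x) t = Real.exp (-2 * v x t) * lap (fun y => v y t) x - 1)
    (hrobin : ∀ x : E2, ‖x‖ = 1 → ∀ t ∈ Itv T,
      (inner ℝ (gradient (fun y => v y t) x) x : ℝ) = ψ x t * Real.exp (v x t) - 1)
    (hinit1 : sSup ((fun x => v x 0) '' Metric.sphere (0:E2) 1)
      < sSup ((fun x => v x 0) '' Metric.closedBall (0:E2) 1))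
    (hinit2 : sSup ((fun x => v x 0) '' Metric.closedBall (0:E2) 1) < -Real.log (1 + ε₀)) :
    (∀ t ∈ Itv T, ∀ x ∈ Metric.closedBall (0:E2) 1,
      v x t ≤ sSup ((fun x => v x 0) '' Metric.closedBall (0:E2) 1) - t) ∧
    (T = ⊤ →
      Tendsto (fun t => sSup ((fun x => v x t) '' Metric.closedBall (0:E2) 1)) atTop atBot) := by
  set D : Set E2 := Metric.closedBall (0:E2) 1 with hD_def
  set M₀ : ℝ := sSup ((fun x => v x 0) '' D) with hM₀_def
  have hD0 : (0:E2) ∈ D := Metric.mem_closedBall_self (by norm_num)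
  have h0T : (0:ℝ) ∈ Itv T := ⟨le_rfl, by exact_mod_cast hT⟩
  have hIccSub : ∀ {t₁ : ℝ}, t₁ ∈ Itv T → Icc (0:ℝ) t₁ ⊆ Itv T := by
    intro t₁ ht₁ s hs
    exact ⟨hs.1, lt_of_le_of_lt (EReal.coe_le_coe_iff.2 hs.2) ht₁.2⟩
  have hvc_slice : ∀ t ∈ Itv T, ContinuousOn (fun y => v y t) D := by
    intro t ht
    exact hvc.comp ((continuous_id.prodMk continuous_const).continuousOn)
      (fun y hy => ⟨hy, ht⟩)
  have hvt_slice : ∀ y ∈ D, ContinuousOn (fun s => v y s) (Itv T) := by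
    intro y hy
    exact hvc.comp ((continuous_const.prodMk continuous_id).continuousOn)
      (fun s hs => ⟨hy, hs⟩)
  have hM0_le : ∀ y ∈ D, v y 0 ≤ M₀ := by
    intro y hy
    exact le_csSup ((isCompact_closedBall _ _).image_of_continuousOn
      (hvc_slice 0 h0T)).bddAbove (mem_image_of_mem _ hy)
  have hM0L : M₀ < -Real.log (1 + ε₀) := hinit2
  have h1ε : (0:ℝ) < 1 + ε₀ := by linarith [hε₀.1]
  -- the pointwise maximum principle
  have MP : ∀ τ ∈ Itv T, ∀ x₀ ∈ D, (∀ y ∈ D, v y τ ≤ v x₀ τ) →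
      v x₀ τ < -Real.log (1 + ε₀) → deriv (v x₀) τ ≤ -1 := by
    intro τ hτ x₀ hx₀ hmax hlt
    rcases lt_or_eq_of_le (mem_closedBall_zero_iff.1 hx₀) with hxlt | hxeq
    · have hlap : lap (fun y => v y τ) x₀ ≤ 0 := lap_nonpos hxlt (hvc_slice τ hτ) hmax
      rw [hpde x₀ hx₀ τ hτ]
      have hmm : Real.exp (-2 * v x₀ τ) * lap (fun y => v y τ) x₀ ≤ 0 :=
        mul_nonpos_of_nonneg_of_nonpos (Real.exp_pos _).le hlap
      linarith
    · exfalso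
      have hrob := hrobin x₀ hxeq τ hτ
      have hinner : (inner ℝ (gradient (fun y => v y τ) x₀) x₀ : ℝ)
          = fderiv ℝ (fun y => v y τ) x₀ x₀ := by
        rw [gradient]; exact InnerProductSpace.toDual_symm_apply
      have hψ := hψle x₀ hxeq τ hτ
      have hexp : Real.exp (v x₀ τ) < Real.exp (-Real.log (1 + ε₀)) := Real.exp_lt_exp.2 hlt
      have hval : Real.exp (-Real.log (1 + ε₀)) = (1 + ε₀)⁻¹ := by
        rw [Real.exp_neg, Real.exp_log h1ε]
      have hneg : fderiv ℝ (fun y => v y τ) x₀ x₀ < 0 := by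
        rw [← hinner, hrob]
        have h1 : ψ x₀ τ * Real.exp (v x₀ τ) ≤ (1 + ε₀) * Real.exp (v x₀ τ) :=
          mul_le_mul_of_nonneg_right hψ (Real.exp_pos _).le
        have h2 : (1 + ε₀) * Real.exp (v x₀ τ) < (1 + ε₀) * (1 + ε₀)⁻¹ := by
          apply mul_lt_mul_of_pos_left _ h1ε
          rw [← hval]; exact hexp
        rw [mul_inv_cancel₀ (ne_of_gt h1ε)] at h2
        linarith
      exact boundary_contra hxeq hneg hmax
  -- the propagation step
  have prop : ∀ ε ∈ Ioo (0:ℝ) 1, ∀ t₁ ∈ Itv T, ∀ τ, τ ∈ Icc 0 t₁ →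
      (∀ y ∈ D, v y τ + (1 - ε) * τ ≤ M₀) →
      ∃ δ > 0, ∀ s, τ ≤ s → s ≤ τ + δ → s ≤ t₁ → ∀ y ∈ D, v y s + (1 - ε) * s ≤ M₀ := by
    intro ε hε t₁ ht₁ τ hτIcc hP
    have hτT : τ ∈ Itv T := hIccSub ht₁ ⟨hτIcc.1, hτIcc.2⟩
    have key : ∀ x ∈ D, ∃ δ > 0, ∃ U : Set E2, IsOpen U ∧ x ∈ U ∧
        ∀ y ∈ U, y ∈ D → ∀ s, τ ≤ s → s ≤ τ + δ → s ≤ t₁ → v y s + (1 - ε) * s ≤ M₀ := by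
      intro x hx
      by_cases hcase : v x τ + (1 - ε) * τ = M₀
      · -- x is a maximizer of v (·, τ)
        have hmax : ∀ y ∈ D, v y τ ≤ v x τ := by
          intro y hy
          have := hP y hy
          linarith
        have hvlt : v x τ < -Real.log (1 + ε₀) := by
          have h1 : 0 ≤ (1 - ε) * τ := mul_nonneg (by linarith [hε.2]) hτIcc.1
          linarith
        have hd := MP τ hτT x hx hmax hvlt
        have hcw : ContinuousWithinAt (fun p : E2 × ℝ => deriv (v p.1) p.2)
            (D ×ˢ Itv T) (x, τ) := hvt (x, τ) ⟨hx, hτT⟩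
        have hIio : Iio (-(1 - ε)) ∈ 𝓝 (deriv (v x) τ) := Iio_mem_nhds (by linarith [hε.1])
        have hpre := hcw.preimage_mem_nhdsWithin hIio
        rw [mem_nhdsWithin] at hpre
        obtain ⟨O, hOopen, hxO, hOsub⟩ := hpre
        obtain ⟨rr, hrr, hball⟩ := Metric.isOpen_iff.1 hOopen _ hxO
        refine ⟨rr/2, by positivity, Metric.ball x (rr/2), Metric.isOpen_ball,
          Metric.mem_ball_self (by positivity), ?_⟩
        intro y hyU hyD s hs1 hs2 hs3
        have hderneg : ∀ σ, τ ≤ σ → σ ≤ s → deriv (v y) σ < -(1 - ε) := by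
          intro σ hσ1 hσ2
          have hσT : σ ∈ Itv T := hIccSub ht₁ ⟨le_trans hτIcc.1 hσ1, le_trans hσ2 hs3⟩
          have hmemO : ((y, σ) : E2 × ℝ) ∈ O := by
            apply hball
            rw [Metric.mem_ball, Prod.dist_eq]
            apply max_lt
            · exact lt_trans (Metric.mem_ball.1 hyU) (by linarith)
            · rw [Real.dist_eq, abs_of_nonneg (by linarith)]
              linarith
          exact hOsub ⟨hmemO, ⟨hyD, hσT⟩⟩
        set w : ℝ → ℝ := fun σ => v y σ + (1 - ε) * σ with hw_def
        have hw_cont : ContinuousOn w (Icc τ s) := by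
          apply ContinuousOn.add
          · exact (hvt_slice y hyD).mono (fun σ hσ =>
              hIccSub ht₁ ⟨le_trans hτIcc.1 hσ.1, le_trans hσ.2 hs3⟩)
          · exact (continuous_const.mul continuous_id).continuousOn
        have hw_deriv : ∀ σ ∈ interior (Icc τ s), deriv w σ < 0 := by
          rw [interior_Icc]
          intro σ hσ
          have hdσ := hderneg σ hσ.1.le hσ.2.le
          have hdiff : DifferentiableAt ℝ (v y) σ :=
            differentiableAt_of_deriv_ne_zero (by intro h; rw [h] at hdσ; linarith [hε.2])
          have hwd : HasDerivAt w (deriv (v y) σ + (1 - ε)) σ := by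
            have h2 : HasDerivAt (fun σ : ℝ => (1 - ε) * σ) (1 - ε) σ := by
              simpa using (hasDerivAt_id σ).const_mul (1 - ε)
            exact hdiff.hasDerivAt.add h2
          rw [hwd.deriv]
          linarith
        have hws : w s ≤ w τ := by
          rcases eq_or_lt_of_le hs1 with heq | hlt'
          · rw [← heq]
          · have hA := strictAntiOn_of_deriv_neg (convex_Icc τ s) hw_cont hw_deriv
            exact (hA ⟨le_rfl, hs1⟩ ⟨hs1, le_rfl⟩ hlt').le
        have hwτ : w τ ≤ M₀ := hP y hyD
        calc v y s + (1 - ε) * s = w s := rfl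
          _ ≤ w τ := hws
          _ ≤ M₀ := hwτ
      · -- strict inequality at (x, τ): propagate by continuity
        have hlt : v x τ + (1 - ε) * τ < M₀ := lt_of_le_of_ne (hP x hx) hcase
        have hWc : ContinuousWithinAt (fun p : E2 × ℝ => v p.1 p.2 + (1 - ε) * p.2)
            (D ×ˢ Itv T) (x, τ) :=
          (hvc.add ((continuous_const.mul continuous_snd).continuousOn)) (x, τ) ⟨hx, hτT⟩
        have hIio : Iio M₀ ∈ 𝓝 (v x τ + (1 - ε) * τ) := Iio_mem_nhds hlt
        have hpre := hWc.preimage_mem_nhdsWithin hIio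
        rw [mem_nhdsWithin] at hpre
        obtain ⟨O, hOopen, hxO, hOsub⟩ := hpre
        obtain ⟨rr, hrr, hball⟩ := Metric.isOpen_iff.1 hOopen _ hxO
        refine ⟨rr/2, by positivity, Metric.ball x (rr/2), Metric.isOpen_ball,
          Metric.mem_ball_self (by positivity), ?_⟩
        intro y hyU hyD s hs1 hs2 hs3
        have hsT : s ∈ Itv T := hIccSub ht₁ ⟨le_trans hτIcc.1 hs1, hs3⟩
        have hmemO : ((y, s) : E2 × ℝ) ∈ O := by
          apply hball
          rw [Metric.mem_ball, Prod.dist_eq]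
          apply max_lt
          · exact lt_trans (Metric.mem_ball.1 hyU) (by linarith)
          · rw [Real.dist_eq, abs_of_nonneg (by linarith)]
            linarith
        exact (hOsub ⟨hmemO, ⟨hyD, hsT⟩⟩).le
    choose! δf hδf Uf hUo hxU hgood using key
    obtain ⟨b', hb'sub, hb'fin, hb'cov⟩ :=
      (isCompact_closedBall (0:E2) 1).elim_finite_subcover_image
        (fun i hi => hUo i hi) (fun y hy => mem_iUnion₂.2 ⟨y, hy, hxU y hy⟩)
    have hb'ne : b'.Nonempty := by
      obtain ⟨i, hi, _⟩ := mem_iUnion₂.1 (hb'cov hD0)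
      exact ⟨i, hi⟩
    set F := hb'fin.toFinset with hF_def
    have hFne : F.Nonempty := by
      obtain ⟨i, hi⟩ := hb'ne
      exact ⟨i, hb'fin.mem_toFinset.2 hi⟩
    set δ : ℝ := F.inf' hFne δf with hδ_def
    have hδpos : 0 < δ := by
      rw [hδ_def, Finset.lt_inf'_iff]
      intro i hi
      exact hδf i (hb'sub (hb'fin.mem_toFinset.1 hi))
    refine ⟨δ, hδpos, ?_⟩
    intro s hs1 hs2 hs3 y hy
    obtain ⟨i, hib', hyU⟩ := mem_iUnion₂.1 (hb'cov hy)
    have hδle : δ ≤ δf i := Finset.inf'_le _ (hb'fin.mem_toFinset.2 hib')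
    exact hgood i (hb'sub hib') y hyU hy s hs1 (by linarith) hs3
  -- the main a priori bound for each ε
  have main : ∀ ε ∈ Ioo (0:ℝ) 1, ∀ t₁ ∈ Itv T, ∀ s ∈ Icc (0:ℝ) t₁, ∀ y ∈ D,
      v y s + (1 - ε) * s ≤ M₀ := by
    intro ε hε t₁ ht₁
    by_contra hbad
    push_neg at hbad
    obtain ⟨s₀, hs₀, y₀, hy₀, hbad₀⟩ := hbad
    set Bad : Set ℝ := {s ∈ Icc (0:ℝ) t₁ | ¬ ∀ y ∈ D, v y s + (1 - ε) * s ≤ M₀} with hBad_def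
    have hne : Bad.Nonempty := ⟨s₀, hs₀, by push_neg; exact ⟨y₀, hy₀, hbad₀⟩⟩
    have hbdd : BddBelow Bad := ⟨0, fun b hb => hb.1.1⟩
    set σ : ℝ := sInf Bad with hσ_def
    have hσlb : ∀ b ∈ Bad, σ ≤ b := fun b hb => csInf_le hbdd hb
    have hσ0 : 0 ≤ σ := le_csInf hne (fun b hb => hb.1.1)
    have hσt₁ : σ ≤ t₁ := by
      obtain ⟨b, hb⟩ := hne
      exact le_trans (hσlb b hb) hb.1.2
    have hbelow : ∀ s, 0 ≤ s → s < σ → s ≤ t₁ → ∀ y ∈ D, v y s + (1 - ε) * s ≤ M₀ := by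
      intro s h1 h2 h3
      by_contra hc
      have : s ∈ Bad := ⟨⟨h1, h3⟩, hc⟩
      linarith [hσlb s this]
    have hGoodσ : ∀ y ∈ D, v y σ + (1 - ε) * σ ≤ M₀ := by
      intro y hy
      rcases eq_or_lt_of_le hσ0 with h0 | h0
      · rw [← h0]
        simpa using hM0_le y hy
      · have hσT : σ ∈ Itv T := hIccSub ht₁ ⟨hσ0, hσt₁⟩
        have hc1 : ContinuousOn (fun s => v y s + (1 - ε) * s) (Icc 0 σ) := by
          apply ContinuousOn.add
          · exact (hvt_slice y hy).mono (fun s hs =>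
              hIccSub ht₁ ⟨hs.1, le_trans hs.2 hσt₁⟩)
          · exact (continuous_const.mul continuous_id).continuousOn
        have hcw : ContinuousWithinAt (fun s => v y s + (1 - ε) * s) (Ico 0 σ) σ :=
          (hc1.continuousWithinAt ⟨hσ0, le_rfl⟩).mono Ico_subset_Icc_self
        have hnb : (𝓝[Ico (0:ℝ) σ] σ).NeBot := by
          rw [← mem_closure_iff_nhdsWithin_neBot, closure_Ico (ne_of_lt h0)]
          exact ⟨hσ0, le_rfl⟩
        apply le_of_tendsto hcw
        filter_upwards [self_mem_nhdsWithin] with s hs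
        exact hbelow s hs.1 hs.2 (le_trans hs.2.le hσt₁) y hy
    obtain ⟨δ, hδ, hgood⟩ := prop ε hε t₁ ht₁ σ ⟨hσ0, hσt₁⟩ hGoodσ
    have hstep : ∀ b ∈ Bad, σ + δ ≤ b := by
      intro b hb
      by_contra hc
      push_neg at hc
      exact hb.2 (hgood b (hσlb b hb) hc.le hb.1.2)
    have := le_csInf hne hstep
    rw [← hσ_def] at this
    linarith
  have part1 : ∀ t ∈ Itv T, ∀ x ∈ D, v x t ≤ M₀ - t := by
    intro t ht x hx
    rcases eq_or_lt_of_le ht.1 with h0 | h0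
    · rw [← h0]
      simpa using hM0_le x hx
    · by_contra hc
      push_neg at hc
      set d : ℝ := v x t - (M₀ - t) with hd_def
      have hdpos : 0 < d := by rw [hd_def]; linarith
      set ε : ℝ := min (1/2) (d / (2 * t)) with hε_def
      have hεpos : 0 < ε := lt_min (by norm_num) (by positivity)
      have hεlt : ε < 1 := lt_of_le_of_lt (min_le_left _ _) (by norm_num)
      have hb := main ε ⟨hεpos, hεlt⟩ t ht t ⟨ht.1, le_rfl⟩ x hx
      have hεt : ε * t ≤ d / 2 := by
        calc ε * t ≤ (d / (2 * t)) * t := mul_le_mul_of_nonneg_right (min_le_right _ _) h0.le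
          _ = d / 2 := by field_simp
      rw [hd_def] at hεt
      nlinarith
  constructor
  · exact part1
  · intro hTtop
    have hmemT : ∀ t : ℝ, 0 ≤ t → t ∈ Itv T := by
      intro t ht
      refine ⟨ht, ?_⟩
      rw [hTtop]
      exact EReal.coe_lt_top t
    have htend : Tendsto (fun t : ℝ => M₀ - t) atTop atBot := by
      have := tendsto_atBot_add_const_left atTop M₀ tendsto_neg_atTop_atBot
      simpa [sub_eq_add_neg] using this
    apply tendsto_atBot_mono' atTop _ htend
    filter_upwards [eventually_ge_atTop (0:ℝ)] with t ht
    apply csSup_le (Set.Nonempty.image _ ⟨0, hD0⟩)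
    rintro z ⟨y, hy, rfl⟩
    exact part1 t (hmemT t ht) y hy
end
end

section
/- Let ξ : [0, ∞) → ℝ be locally Lipschitz and suppose that for every t ≥ 0 the upper right Dini derivative satisfies limsup_{τ → 0⁺} (ξ(t+τ) − ξ(t))/τ ≤ e^{−2ξ(t)} − 1. Then ξ(t) ≤ max{ξ(0), 0} for all t ≥ 0, and limsup_{t → ∞} ξ(t) ≤ 0. -/
open Real Set Filter MeasureTheory
open scoped Topology

noncomputable section

theorem stmt_4 (ξ : ℝ → ℝ)
    (hlip : ∀ t : ℝ, 0 ≤ t → ∃ ε > (0:ℝ), ∃ K : NNReal,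
      LipschitzOnWith K ξ (Icc (t - ε) (t + ε) ∩ Ici 0))
    (hdini : ∀ t : ℝ, 0 ≤ t →
      Filter.limsup (fun τ : ℝ => (ξ (t + τ) - ξ t) / τ) (𝓝[>] (0:ℝ))
        ≤ Real.exp (-2 * ξ t) - 1) :
    (∀ t : ℝ, 0 ≤ t → ξ t ≤ max (ξ 0) 0) ∧
    (∀ ε > (0:ℝ), ∀ᶠ t in atTop, ξ t ≤ ε) := by
  -- continuity of ξ on Ici 0
  have hcont : ContinuousOn ξ (Ici (0:ℝ)) := by
    intro t ht
    obtain ⟨ε, hε, K, hK⟩ := hlip t ht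
    have h1 : ContinuousWithinAt ξ (Icc (t - ε) (t + ε) ∩ Ici 0) t :=
      hK.continuousOn t ⟨⟨by linarith, by linarith⟩, ht⟩
    refine h1.mono_of_mem_nhdsWithin ?_
    exact inter_mem (mem_nhdsWithin_of_mem_nhds (Icc_mem_nhds (by linarith) (by linarith)))
      self_mem_nhdsWithin
  -- the liminf-slope condition
  have hslope : ∀ x : ℝ, 0 ≤ x → ∀ r : ℝ, Real.exp (-2 * ξ x) - 1 < r →
      ∃ᶠ z in 𝓝[>] x, slope ξ x z < r := by
    intro x hx r hr
    have hbdd : IsBoundedUnder (· ≤ ·) (𝓝[>] (0:ℝ))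
        (fun τ : ℝ => (ξ (x + τ) - ξ x) / τ) := by
      obtain ⟨ε, hε, K, hK⟩ := hlip x hx
      refine isBoundedUnder_of_eventually_le (a := (K:ℝ)) ?_
      filter_upwards [Ioo_mem_nhdsGT_of_mem (Set.mem_Ico.2 ⟨le_rfl, hε⟩)] with τ hτ
      obtain ⟨hτ1, hτ2⟩ := hτ
      have hmem : x + τ ∈ Icc (x - ε) (x + ε) ∩ Ici 0 :=
        ⟨⟨by linarith, by linarith⟩, Set.mem_Ici.2 (by positivity)⟩
      have hmemx : x ∈ Icc (x - ε) (x + ε) ∩ Ici 0 :=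
        ⟨⟨by linarith, by linarith⟩, hx⟩
      have := hK.dist_le_mul _ hmem _ hmemx
      rw [Real.dist_eq, Real.dist_eq] at this
      have habs : |ξ (x + τ) - ξ x| ≤ K * τ := by
        simpa [abs_of_pos hτ1] using this
      have h1 : ξ (x + τ) - ξ x ≤ K * τ := (abs_le.1 habs).2
      rw [div_le_iff₀ hτ1]
      linarith
    have hev : ∀ᶠ τ in 𝓝[>] (0:ℝ), (ξ (x + τ) - ξ x) / τ < r :=
      Filter.eventually_lt_of_limsup_lt (lt_of_le_of_lt (hdini x hx) hr) hbdd
    have htend : Tendsto (fun z : ℝ => z - x) (𝓝[>] x) (𝓝[>] (0:ℝ)) := by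
      apply tendsto_nhdsWithin_of_tendsto_nhds_of_eventually_within
      · have : Tendsto (fun z : ℝ => z - x) (𝓝 x) (𝓝 (x - x)) :=
          (continuous_id.sub continuous_const).tendsto x
        simpa using this.mono_left nhdsWithin_le_nhds
      · filter_upwards [self_mem_nhdsWithin] with z hz
        exact Set.mem_Ioi.2 (sub_pos.2 (Set.mem_Ioi.1 hz))
    have := htend.eventually hev
    refine (this.mono ?_).frequently
    intro z hz
    simpa [slope_def_field, div_eq_div_iff] using hz
  -- main invariance lemma: if ξ a ≤ M and M > 0, then ξ b ≤ M for b ≥ a ≥ 0.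
  have inv : ∀ M : ℝ, 0 < M → ∀ a b : ℝ, 0 ≤ a → a ≤ b → ξ a ≤ M → ξ b ≤ M := by
    intro M hM a b ha hab hξa
    have hsub : Icc a b ⊆ Ici (0:ℝ) := fun x hx => le_trans ha hx.1
    refine image_le_of_liminf_slope_right_lt_deriv_boundary'
      (f' := fun x => Real.exp (-2 * ξ x) - 1)
      (hcont.mono hsub)
      (fun x hx r hr => hslope x (le_trans ha hx.1) r hr)
      hξa (continuousOn_const) (B' := fun _ => 0)
      (fun x _ => (hasDerivWithinAt_const x _ M).congr_deriv rfl)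
      ?_ (right_mem_Icc.2 hab)
    intro x _ hxM
    show Real.exp (-2 * ξ x) - 1 < 0
    rw [hxM]
    have : Real.exp (-2 * M) < 1 := by
      rw [Real.exp_lt_one_iff]; linarith
    linarith
  constructor
  · -- part 1
    intro t ht
    have key : ∀ e : ℝ, 0 < e → ξ t ≤ max (ξ 0) 0 + e := by
      intro e he
      exact inv (max (ξ 0) 0 + e) (by positivity) 0 t le_rfl ht
        (by linarith [le_max_left (ξ 0) (0:ℝ)])
    linarith [le_of_forall_pos_le_add key]
  · -- part 2
    intro ε hε
    set δ : ℝ := 1 - Real.exp (-2 * ε) with hδdef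
    have hδ : 0 < δ := by
      have : Real.exp (-2 * ε) < 1 := by rw [Real.exp_lt_one_iff]; linarith
      simp only [hδdef]; linarith
    -- there exists T ≥ 0 with ξ T ≤ ε
    have hexT : ∃ T : ℝ, 0 ≤ T ∧ ξ T ≤ ε := by
      by_contra h
      push_neg at h
      set T : ℝ := max ((ξ 0 - ε) / δ + 1) 0 with hT
      have hT0 : 0 ≤ T := le_max_right _ _
      have hTbig : ξ 0 - δ * T < ε := by
        have h1 : (ξ 0 - ε) / δ + 1 ≤ T := le_max_left _ _
        have h2 : (ξ 0 - ε) / δ < T := by linarith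
        have := (div_lt_iff₀ hδ).1 h2
        linarith
      have hcomp : ξ T ≤ ξ 0 - δ * T := by
        have hsub : Icc (0:ℝ) T ⊆ Ici (0:ℝ) := fun x hx => hx.1
        have := image_le_of_liminf_slope_right_lt_deriv_boundary'
          (f' := fun x => Real.exp (-2 * ξ x) - 1)
          (hcont.mono hsub)
          (fun x hx r hr => hslope x hx.1 r hr)
          (B := fun t => ξ 0 - δ * t) (by simp) (B' := fun _ => -δ)
          (by fun_prop)
          (fun x _ => by
            have : HasDerivWithinAt (fun t : ℝ => ξ 0 - δ * t) (0 - δ * 1) (Ici x) x :=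
              ((hasDerivWithinAt_const x _ (ξ 0)).sub
                ((hasDerivWithinAt_id x _).const_mul δ))
            simpa using this)
          ?_ (right_mem_Icc.2 hT0)
        · exact this
        · intro x hx _
          have hxε : ε < ξ x := h x hx.1
          have : Real.exp (-2 * ξ x) < Real.exp (-2 * ε) :=
            Real.exp_lt_exp.2 (by linarith)
          simp only [hδdef]; linarith
      exact absurd (h T hT0) (not_lt.2 (le_trans hcomp hTbig.le))
    obtain ⟨T, hT0, hTε⟩ := hexT
    filter_upwards [eventually_ge_atTop T] with t ht
    exact inv ε hε T t hT0 ht hTε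
end
end
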